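/- Let k : [0,2]×[0,1] → ℂ be continuous and let F : L²_ℂ(0,1) → L²_ℂ(0,2) be given by [F(x)](s) = ∫₀ˢ k(s,q)x(s−q)x(q)dq. Then F is Fréchet differentiable at every x₀ ∈ L²_ℂ(0,1) with derivative [F′(x₀)h](s) = ∫₀ˢ (k(s,q) + k(s,s−q)) x₀(s−q) h(q) dq, and F′(x₀) : L²_ℂ(0,1) → L²_ℂ(0,2) is a bounded linear operator. -/

import Mathlib

/-!
Write `B_w(u, v)(s) = ∫₀ˢ w(s,q) u(s-q) v(q) dq` (`kernelConv w u v s`), so that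
`F x = B_k(x, x)`. The substitution `q ↦ s - q` turns `B_k(h, x₀)` into `B_{k̃}(x₀, h)` with
`k̃(s,q) = k(s,s-q)`; hence `F'(x₀) h = B_k(x₀, h) + B_k(h, x₀)` and
`F(x₀ + h) - F(x₀) - F'(x₀) h = B_k(h, h)`. Cauchy–Schwarz and translation invariance of
Lebesgue measure give `|B_w(u, v)(s)| ≤ sup |w| ‖u‖₂ ‖v‖₂` for every `s`, hence
`‖B_w(u, v)‖_{L²(0,2)} ≤ √2 sup |w| ‖u‖₂ ‖v‖₂`. This bounds `F'(x₀)` and makes the remainder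
`O(‖h‖₂²)`.
-/

open MeasureTheory Set

section L2

variable {α E : Type*} [MeasurableSpace α] {μ : Measure α} [NormedAddCommGroup E]

theorem memLp_of_memLp_restrict_of_eq_zero {p : ENNReal} {S : Set α} {f : α → E}
    (hS : MeasurableSet S) (hf : MemLp f p (μ.restrict S)) (hf0 : ∀ a, a ∉ S → f a = 0) :
    MemLp f p μ := by
  rwa [← indicator_eq_self.2 (Function.support_subset_iff'.2 hf0), memLp_indicator_iff_restrict hS]

theorem integral_norm_mul_norm_le_sqrt_mul_sqrt {f g : α → E} (hf : MemLp f 2 μ)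
    (hg : MemLp g 2 μ) :
    ∫ a, ‖f a‖ * ‖g a‖ ∂μ ≤ √(∫ a, ‖f a‖ ^ 2 ∂μ) * √(∫ a, ‖g a‖ ^ 2 ∂μ) := by
  have h := integral_mul_norm_le_Lp_mul_Lq Real.HolderConjugate.two_two (by simpa using hf)
    (by simpa using hg)
  simpa only [Real.rpow_two, ← Real.sqrt_eq_rpow] using h

theorem sqrt_setIntegral_norm_sq_le {G : α → E} {S : Set α} (hS : μ S ≠ ⊤) {B : ℝ}
    (hB : 0 ≤ B) (hG : ∀ a, ‖G a‖ ≤ B) :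
    √(∫ a in S, ‖G a‖ ^ 2 ∂μ) ≤ √(μ.real S) * B := by
  have h : ∫ a in S, ‖G a‖ ^ 2 ∂μ ≤ ∫ _ in S, B ^ 2 ∂μ :=
    integral_mono_of_nonneg (.of_forall fun _ ↦ by positivity)
      (integrableOn_const hS) (.of_forall fun a ↦ pow_le_pow_left₀ (norm_nonneg _) (hG a) 2)
  rw [setIntegral_const, smul_eq_mul] at h
  calc √(∫ a in S, ‖G a‖ ^ 2 ∂μ) ≤ √(μ.real S * B ^ 2) := Real.sqrt_le_sqrt h
    _ = √(μ.real S) * B := by rw [Real.sqrt_mul measureReal_nonneg, Real.sqrt_sq hB]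

end L2

theorem setIntegral_Ioc_comp_sub_left {E : Type*} [NormedAddCommGroup E] [NormedSpace ℝ E]
    (f : ℝ → E) (s : ℝ) : ∫ q in Ioc 0 s, f (s - q) = ∫ q in Ioc 0 s, f q := by
  rcases le_or_gt 0 s with hs | hs
  · simpa [intervalIntegral.integral_of_le hs] using
      intervalIntegral.integral_comp_sub_left (a := 0) (b := s) f s
  · simp [Ioc_eq_empty hs.not_gt]

theorem MeasureTheory.MemLp.comp_sub_left {E : Type*} [NormedAddCommGroup E] {u : ℝ → E}
    (hu : MemLp u 2 volume) (s : ℝ) : MemLp (fun q ↦ u (s - q)) 2 volume :=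
  hu.comp_measurePreserving (Measure.measurePreserving_sub_left volume s)

theorem MeasureTheory.AEStronglyMeasurable.comp_sub_left {E : Type*} [TopologicalSpace E]
    {u : ℝ → E} (hu : AEStronglyMeasurable u volume) (s : ℝ) :
    AEStronglyMeasurable (fun q ↦ u (s - q)) volume :=
  hu.comp_quasiMeasurePreserving
    (Measure.measurePreserving_sub_left volume s).quasiMeasurePreserving

theorem memLp_of_memLp_restrict_Ioc {E : Type*} [NormedAddCommGroup E] {p : ENNReal} {a b : ℝ}
    {u : ℝ → E} (hu : MemLp u p (volume.restrict (Ioc a b)))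
    (hu0 : ∀ t, t ∉ Icc a b → u t = 0) : MemLp u p volume := by
  rw [Measure.restrict_congr_set Ioc_ae_eq_Icc] at hu
  exact memLp_of_memLp_restrict_of_eq_zero measurableSet_Icc hu hu0

theorem integral_norm_sq_eq_setIntegral_Ioc {E : Type*} [NormedAddCommGroup E] {a b : ℝ}
    {u : ℝ → E} (hu0 : ∀ t, t ∉ Icc a b → u t = 0) :
    ∫ q, ‖u q‖ ^ 2 = ∫ q in Ioc a b, ‖u q‖ ^ 2 := by
  rw [Measure.restrict_congr_set Ioc_ae_eq_Icc,
    setIntegral_eq_integral_of_forall_compl_eq_zero fun t ht ↦ by simp [hu0 t ht]]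

theorem exists_forall_norm_le_of_continuousOn {X E : Type*} [TopologicalSpace X]
    [SeminormedAddGroup E] {f : X → E} {K : Set X} (hK : IsCompact K) (hf : ContinuousOn f K)
    (hf0 : ∀ x, x ∉ K → f x = 0) : ∃ M, 0 ≤ M ∧ ∀ x, ‖f x‖ ≤ M := by
  obtain ⟨C, hC⟩ := hK.exists_bound_of_continuousOn hf
  refine ⟨max C 0, le_max_right _ _, fun x ↦ ?_⟩
  by_cases hx : x ∈ K
  · exact (hC x hx).trans (le_max_left _ _)
  · simp [hf0 x hx]

theorem aestronglyMeasurable_of_continuousOn_of_eq_zero {X E : Type*} [MeasurableSpace X]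
    [TopologicalSpace X] [OpensMeasurableSpace X] [NormedAddCommGroup E]
    [SecondCountableTopologyEither X E] {μ : Measure X} {f : X → E} {S : Set X}
    (hS : MeasurableSet S) (hf : ContinuousOn f S) (hf0 : ∀ x, x ∉ S → f x = 0) :
    AEStronglyMeasurable f μ := by
  rw [← indicator_eq_self.2 (Function.support_subset_iff'.2 hf0),
    aestronglyMeasurable_indicator_iff hS]
  exact hf.aestronglyMeasurable hS

theorem aestronglyMeasurable_slice {X Y E : Type*} [TopologicalSpace X] [MeasurableSpace Y]
    [TopologicalSpace Y] [OpensMeasurableSpace Y] [NormedAddCommGroup E]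
    [SecondCountableTopologyEither Y E] {μ : Measure Y} {k : X → Y → E}
    {A : Set X} {B : Set Y} (hB : MeasurableSet B) (hk : ContinuousOn (Function.uncurry k) (A ×ˢ B))
    (hk0 : ∀ s q, (s, q) ∉ A ×ˢ B → k s q = 0) (s : X) : AEStronglyMeasurable (k s) μ := by
  refine aestronglyMeasurable_of_continuousOn_of_eq_zero hB ?_
    fun q hq ↦ hk0 s q fun h ↦ hq (mem_prod.1 h).2
  by_cases hs : s ∈ A
  · exact hk.comp (Continuous.prodMk_right s).continuousOn fun q hq ↦ ⟨hs, hq⟩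
  · exact continuousOn_const.congr fun q _ ↦ hk0 s q fun h ↦ hs (mem_prod.1 h).1

noncomputable def kernelConv (w : ℝ → ℝ → ℂ) (u v : ℝ → ℂ) (s : ℝ) : ℂ :=
  ∫ q in Ioc 0 s, w s q * u (s - q) * v q

section kernelConv

variable {w w' : ℝ → ℝ → ℂ} {u v : ℝ → ℂ} {s M : ℝ}

theorem integrable_kernelConv_integrand (hw : AEStronglyMeasurable (w s) volume)
    (hwM : ∀ q, ‖w s q‖ ≤ M) (hu : MemLp u 2 volume) (hv : MemLp v 2 volume) :
    Integrable (fun q ↦ w s q * u (s - q) * v q) volume := by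
  simpa only [mul_assoc, Pi.mul_apply] using
    ((hu.comp_sub_left s).integrable_mul hv).bdd_mul hw (.of_forall hwM)

theorem kernelConv_add_left {u₁ u₂ : ℝ → ℂ} (hw : AEStronglyMeasurable (w s) volume)
    (hwM : ∀ q, ‖w s q‖ ≤ M) (hu₁ : MemLp u₁ 2 volume) (hu₂ : MemLp u₂ 2 volume)
    (hv : MemLp v 2 volume) :
    kernelConv w (fun q ↦ u₁ q + u₂ q) v s = kernelConv w u₁ v s + kernelConv w u₂ v s := by
  simp only [kernelConv, mul_add, add_mul]
  exact integral_add (integrable_kernelConv_integrand hw hwM hu₁ hv).integrableOn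
    (integrable_kernelConv_integrand hw hwM hu₂ hv).integrableOn

theorem kernelConv_add_right {v₁ v₂ : ℝ → ℂ} (hw : AEStronglyMeasurable (w s) volume)
    (hwM : ∀ q, ‖w s q‖ ≤ M) (hu : MemLp u 2 volume) (hv₁ : MemLp v₁ 2 volume)
    (hv₂ : MemLp v₂ 2 volume) :
    kernelConv w u (fun q ↦ v₁ q + v₂ q) s = kernelConv w u v₁ s + kernelConv w u v₂ s := by
  simp only [kernelConv, mul_add]
  exact integral_add (integrable_kernelConv_integrand hw hwM hu hv₁).integrableOn
    (integrable_kernelConv_integrand hw hwM hu hv₂).integrableOn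

theorem kernelConv_add_kernel {M' : ℝ} (hw : AEStronglyMeasurable (w s) volume)
    (hwM : ∀ q, ‖w s q‖ ≤ M) (hw' : AEStronglyMeasurable (w' s) volume)
    (hw'M : ∀ q, ‖w' s q‖ ≤ M') (hu : MemLp u 2 volume) (hv : MemLp v 2 volume) :
    kernelConv (fun s q ↦ w s q + w' s q) u v s = kernelConv w u v s + kernelConv w' u v s := by
  simp only [kernelConv, add_mul]
  exact integral_add (integrable_kernelConv_integrand hw hwM hu hv).integrableOn
    (integrable_kernelConv_integrand hw' hw'M hu hv).integrableOn

theorem kernelConv_const_mul_right (c : ℂ) :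
    kernelConv w u (fun q ↦ c * v q) s = c * kernelConv w u v s := by
  simp only [kernelConv, ← integral_const_mul]
  congr 1 with q
  ring

theorem kernelConv_swap :
    kernelConv w u v s = kernelConv (fun s q ↦ w s (s - q)) v u s := by
  rw [kernelConv, kernelConv, ← setIntegral_Ioc_comp_sub_left]
  simp only [sub_sub_cancel]
  congr 1 with q
  ring

theorem norm_kernelConv_le (hwM : ∀ q, ‖w s q‖ ≤ M) (hu : MemLp u 2 volume)
    (hv : MemLp v 2 volume) :
    ‖kernelConv w u v s‖ ≤ M * (√(∫ q, ‖u q‖ ^ 2) * √(∫ q, ‖v q‖ ^ 2)) := by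
  have hM : 0 ≤ M := (norm_nonneg _).trans (hwM 0)
  have huv : Integrable (fun q ↦ ‖u (s - q)‖ * ‖v q‖) volume :=
    ((hu.comp_sub_left s).norm.integrable_mul hv.norm :)
  calc ‖kernelConv w u v s‖ ≤ ∫ q in Ioc 0 s, ‖w s q * u (s - q) * v q‖ :=
        norm_integral_le_integral_norm _
    _ ≤ ∫ q in Ioc 0 s, M * (‖u (s - q)‖ * ‖v q‖) :=
        integral_mono_of_nonneg (.of_forall fun _ ↦ norm_nonneg _)
          (huv.const_mul M).integrableOn (.of_forall fun q ↦ by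
            simp only [norm_mul, mul_assoc]
            gcongr
            exact hwM q)
    _ ≤ ∫ q, M * (‖u (s - q)‖ * ‖v q‖) :=
        setIntegral_le_integral (huv.const_mul M) (.of_forall fun _ ↦ by positivity)
    _ ≤ M * (√(∫ q, ‖u (s - q)‖ ^ 2) * √(∫ q, ‖v q‖ ^ 2)) := by
        rw [integral_const_mul]
        gcongr
        exact integral_norm_mul_norm_le_sqrt_mul_sqrt (hu.comp_sub_left s) hv
    _ = M * (√(∫ q, ‖u q‖ ^ 2) * √(∫ q, ‖v q‖ ^ 2)) := by
        rw [integral_sub_left_eq_self (fun q ↦ ‖u q‖ ^ 2)]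

theorem kernelConv_diag_add_sub_sub {h : ℝ → ℂ} (hw : AEStronglyMeasurable (w s) volume)
    (hwM : ∀ q, ‖w s q‖ ≤ M) (hu : MemLp u 2 volume) (hh : MemLp h 2 volume) :
    kernelConv w (fun q ↦ u q + h q) (fun q ↦ u q + h q) s - kernelConv w u u s
      - kernelConv (fun s q ↦ w s q + w s (s - q)) u h s = kernelConv w h h s := by
  rw [kernelConv_add_left (v := fun q ↦ u q + h q) hw hwM hu hh (hu.add hh),
    kernelConv_add_right hw hwM hu hu hh, kernelConv_add_right hw hwM hh hu hh,
    kernelConv_add_kernel hw hwM (hw.comp_sub_left s) (fun q ↦ hwM (s - q)) hu hh,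
    kernelConv_swap (w := w) (u := h) (v := u)]
  ring

theorem sqrt_setIntegral_norm_kernelConv_sq_le {S : Set ℝ} (hS : volume S ≠ ⊤)
    (hwM : ∀ s q, ‖w s q‖ ≤ M) (hu : MemLp u 2 volume) (hv : MemLp v 2 volume) :
    √(∫ s in S, ‖kernelConv w u v s‖ ^ 2) ≤
      √(volume.real S) * M * (√(∫ q, ‖u q‖ ^ 2) * √(∫ q, ‖v q‖ ^ 2)) := by
  have hM : 0 ≤ M := (norm_nonneg _).trans (hwM 0 0)
  rw [mul_assoc]
  exact sqrt_setIntegral_norm_sq_le hS (by positivity)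
    fun s ↦ norm_kernelConv_le (hwM s) hu hv

end kernelConv

theorem exists_pos_forall_mul_mul_self_le {C ε : ℝ} (hC : 0 ≤ C) (hε : 0 < ε) :
    ∃ δ > 0, ∀ N, 0 ≤ N → N ≤ δ → C * (N * N) ≤ ε * N := by
  refine ⟨ε / (C + 1), by positivity, fun N hN hNδ ↦ ?_⟩
  have hNε : N * (C + 1) ≤ ε := (le_div_iff₀ (by positivity)).1 hNδ
  nlinarith

theorem stmt12_general (k : ℝ → ℝ → ℂ)
    (hk : ContinuousOn (Function.uncurry k) (Icc (0:ℝ) 2 ×ˢ Icc (0:ℝ) 1))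
    (hk0 : ∀ s q : ℝ, (s, q) ∉ Icc (0:ℝ) 2 ×ˢ Icc (0:ℝ) 1 → k s q = 0)
    (F : (ℝ → ℂ) → ℝ → ℂ)
    (hF : ∀ x s, F x s = ∫ q in Ioc (0:ℝ) s, k s q * x (s - q) * x q)
    (F' : (ℝ → ℂ) → (ℝ → ℂ) → ℝ → ℂ)
    (hF' : ∀ x₀ h s, F' x₀ h s =
      ∫ q in Ioc (0:ℝ) s, (k s q + k s (s - q)) * x₀ (s - q) * h q)
    (x₀ : ℝ → ℂ)
    (hx₀ : MemLp x₀ 2 (volume.restrict (Ioc (0:ℝ) 1)))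
    (hx₀0 : ∀ t : ℝ, t ∉ Icc (0:ℝ) 1 → x₀ t = 0) :
    -- linearity of `F'(x₀)`
    (∀ h₁ h₂ : ℝ → ℂ, AEStronglyMeasurable h₁ volume → AEStronglyMeasurable h₂ volume →
      MemLp h₁ 2 (volume.restrict (Ioc (0:ℝ) 1)) →
      MemLp h₂ 2 (volume.restrict (Ioc (0:ℝ) 1)) →
      (∀ t : ℝ, t ∉ Icc (0:ℝ) 1 → h₁ t = 0) → (∀ t : ℝ, t ∉ Icc (0:ℝ) 1 → h₂ t = 0) →
      ∀ s : ℝ, F' x₀ (fun q => h₁ q + h₂ q) s = F' x₀ h₁ s + F' x₀ h₂ s) ∧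
    (∀ (c : ℂ) (h : ℝ → ℂ), ∀ s : ℝ, F' x₀ (fun q => c * h q) s = c * F' x₀ h s) ∧
    -- boundedness of `F'(x₀)`
    (∃ C : ℝ, 0 ≤ C ∧ ∀ h : ℝ → ℂ, AEStronglyMeasurable h volume →
      MemLp h 2 (volume.restrict (Ioc (0:ℝ) 1)) →
      (∀ t : ℝ, t ∉ Icc (0:ℝ) 1 → h t = 0) →
      Real.sqrt (∫ s in Ioc (0:ℝ) 2, ‖F' x₀ h s‖^2)
        ≤ C * Real.sqrt (∫ q in Ioc (0:ℝ) 1, ‖h q‖^2)) ∧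
    -- Fréchet differentiability
    (∀ ε : ℝ, 0 < ε → ∃ δ : ℝ, 0 < δ ∧ ∀ h : ℝ → ℂ, AEStronglyMeasurable h volume →
      MemLp h 2 (volume.restrict (Ioc (0:ℝ) 1)) →
      (∀ t : ℝ, t ∉ Icc (0:ℝ) 1 → h t = 0) →
      Real.sqrt (∫ q in Ioc (0:ℝ) 1, ‖h q‖^2) ≤ δ →
      Real.sqrt (∫ s in Ioc (0:ℝ) 2,
          ‖F (fun q => x₀ q + h q) s - F x₀ s - F' x₀ h s‖^2)
        ≤ ε * Real.sqrt (∫ q in Ioc (0:ℝ) 1, ‖h q‖^2)) := by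
  obtain ⟨M, hM, hkM⟩ := exists_forall_norm_le_of_continuousOn
    (isCompact_Icc.prod isCompact_Icc) hk fun p ↦ hk0 p.1 p.2
  replace hkM (s q : ℝ) : ‖k s q‖ ≤ M := hkM (s, q)
  have hkm := aestronglyMeasurable_slice (μ := volume) measurableSet_Icc hk hk0
  set k' := fun s q ↦ k s q + k s (s - q)
  have hk'M (s q : ℝ) : ‖k' s q‖ ≤ 2 * M :=
    (norm_add_le _ _).trans (by linarith [hkM s q, hkM s (s - q)])
  have hF'k : ∀ h s, F' x₀ h s = kernelConv k' x₀ h s := hF' x₀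
  have hx₀L2 := memLp_of_memLp_restrict_Ioc hx₀ hx₀0
  have hS : volume (Ioc (0:ℝ) 2) ≠ ⊤ := measure_Ioc_lt_top.ne
  set V := √(volume.real (Ioc (0:ℝ) 2))
  refine ⟨fun h₁ h₂ _ _ h₁L2 h₂L2 h₁0 h₂0 s ↦ ?_, fun c h s ↦ ?_,
    ⟨V * (2 * M) * √(∫ q in Ioc 0 1, ‖x₀ q‖ ^ 2), by positivity, fun h _ hL2 h0 ↦ ?_⟩,
    fun ε hε ↦ ?_⟩
  · simp only [hF'k]
    exact kernelConv_add_right ((hkm s).add ((hkm s).comp_sub_left s)) (hk'M s) hx₀L2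
      (memLp_of_memLp_restrict_Ioc h₁L2 h₁0) (memLp_of_memLp_restrict_Ioc h₂L2 h₂0)
  · simp only [hF'k]
    exact kernelConv_const_mul_right c
  · simp only [hF'k]
    have := sqrt_setIntegral_norm_kernelConv_sq_le hS hk'M hx₀L2
      (memLp_of_memLp_restrict_Ioc hL2 h0)
    rwa [integral_norm_sq_eq_setIntegral_Ioc hx₀0, integral_norm_sq_eq_setIntegral_Ioc h0,
      ← mul_assoc] at this
  · obtain ⟨δ, hδ, hδε⟩ := exists_pos_forall_mul_mul_self_le (by positivity : 0 ≤ V * M) hε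
    refine ⟨δ, hδ, fun h _ hL2 h0 hhδ ↦ ?_⟩
    have hhL2 := memLp_of_memLp_restrict_Ioc hL2 h0
    have hrem (s : ℝ) : F (fun q ↦ x₀ q + h q) s - F x₀ s - F' x₀ h s = kernelConv k h h s := by
      rw [hF, hF, hF'k]
      exact kernelConv_diag_add_sub_sub (hkm s) (hkM s) hx₀L2 hhL2
    simp only [hrem]
    have := sqrt_setIntegral_norm_kernelConv_sq_le hS hkM hhL2 hhL2
    rw [integral_norm_sq_eq_setIntegral_Ioc h0] at this
    exact this.trans (hδε _ (Real.sqrt_nonneg _) hhδ)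

/-- The kernel-based autoconvolution operator `[F(x)](s) = ∫₀ˢ k(s,q) x(s-q) x(q) dq` with
continuous kernel is Fréchet differentiable at every `x₀ ∈ L²_ℂ(0,1)` with derivative
`[F'(x₀)h](s) = ∫₀ˢ (k(s,q)+k(s,s-q)) x₀(s-q) h(q) dq`, a bounded linear operator from
`L²_ℂ(0,1)` to `L²_ℂ(0,2)`. -/
theorem stmt12 (k : ℝ → ℝ → ℂ)
    (hk : ContinuousOn (Function.uncurry k) (Icc (0:ℝ) 2 ×ˢ Icc (0:ℝ) 1))
    (hk0 : ∀ s q : ℝ, (s, q) ∉ Icc (0:ℝ) 2 ×ˢ Icc (0:ℝ) 1 → k s q = 0)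
    (F : (ℝ → ℂ) → ℝ → ℂ)
    (hF : ∀ x s, F x s = ∫ q in Ioc (0:ℝ) s, k s q * x (s - q) * x q)
    (F' : (ℝ → ℂ) → (ℝ → ℂ) → ℝ → ℂ)
    (hF' : ∀ x₀ h s, F' x₀ h s =
      ∫ q in Ioc (0:ℝ) s, (k s q + k s (s - q)) * x₀ (s - q) * h q)
    (x₀ : ℝ → ℂ) (hx₀m : AEStronglyMeasurable x₀ volume)
    (hx₀ : MemLp x₀ 2 (volume.restrict (Ioc (0:ℝ) 1)))
    (hx₀0 : ∀ t : ℝ, t ∉ Icc (0:ℝ) 1 → x₀ t = 0) :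
    -- linearity of `F'(x₀)`
    (∀ h₁ h₂ : ℝ → ℂ, AEStronglyMeasurable h₁ volume → AEStronglyMeasurable h₂ volume →
      MemLp h₁ 2 (volume.restrict (Ioc (0:ℝ) 1)) →
      MemLp h₂ 2 (volume.restrict (Ioc (0:ℝ) 1)) →
      (∀ t : ℝ, t ∉ Icc (0:ℝ) 1 → h₁ t = 0) → (∀ t : ℝ, t ∉ Icc (0:ℝ) 1 → h₂ t = 0) →
      ∀ s : ℝ, F' x₀ (fun q => h₁ q + h₂ q) s = F' x₀ h₁ s + F' x₀ h₂ s) ∧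
    (∀ (c : ℂ) (h : ℝ → ℂ), ∀ s : ℝ, F' x₀ (fun q => c * h q) s = c * F' x₀ h s) ∧
    -- boundedness of `F'(x₀)`
    (∃ C : ℝ, 0 ≤ C ∧ ∀ h : ℝ → ℂ, AEStronglyMeasurable h volume →
      MemLp h 2 (volume.restrict (Ioc (0:ℝ) 1)) →
      (∀ t : ℝ, t ∉ Icc (0:ℝ) 1 → h t = 0) →
      Real.sqrt (∫ s in Ioc (0:ℝ) 2, ‖F' x₀ h s‖^2)
        ≤ C * Real.sqrt (∫ q in Ioc (0:ℝ) 1, ‖h q‖^2)) ∧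
    -- Fréchet differentiability
    (∀ ε : ℝ, 0 < ε → ∃ δ : ℝ, 0 < δ ∧ ∀ h : ℝ → ℂ, AEStronglyMeasurable h volume →
      MemLp h 2 (volume.restrict (Ioc (0:ℝ) 1)) →
      (∀ t : ℝ, t ∉ Icc (0:ℝ) 1 → h t = 0) →
      Real.sqrt (∫ q in Ioc (0:ℝ) 1, ‖h q‖^2) ≤ δ →
      Real.sqrt (∫ s in Ioc (0:ℝ) 2,
          ‖F (fun q => x₀ q + h q) s - F x₀ s - F' x₀ h s‖^2)
        ≤ ε * Real.sqrt (∫ q in Ioc (0:ℝ) 1, ‖h q‖^2)) :=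
  stmt12_general k hk hk0 F hF F' hF' x₀ hx₀ hx₀0
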